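/- If X is exactly K-row-sparse (X = X^K), the MMV-FACS error bound reduces to ‖X − X̂‖_F ≤ ((1+δ+3ζ)/(1−δ)²)·‖X_{Γᶜ,:}‖_F, and MMV-FACS provides SRER gain at least ((1−δ)²/((1+δ+3ζ)η_i))² over the i-th algorithm whenever η_i < (1−δ)²/(1+δ+3ζ). -/
import Mathlib


open scoped BigOperators
open Matrix

noncomputable def frob {m n : Type*} [Fintype m] [Fintype n] (X : Matrix m n ℝ) : ℝ :=
  Real.sqrt (∑ i, ∑ j, (X i j) ^ 2)

noncomputable def rowNorm {m n : Type*} [Fintype n] (X : Matrix m n ℝ) (i : m) : ℝ :=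
  Real.sqrt (∑ j, (X i j) ^ 2)

noncomputable def norm21 {m n : Type*} [Fintype m] [Fintype n] (X : Matrix m n ℝ) : ℝ :=
  ∑ i, rowNorm X i

noncomputable def restrictRows {m n : Type*} (X : Matrix m n ℝ) (S : Set m) : Matrix m n ℝ :=
  fun i j => S.indicator (fun i' => X i' j) i

noncomputable def vnorm {m : Type*} [Fintype m] (v : m → ℝ) : ℝ :=
  Real.sqrt (∑ i, (v i) ^ 2)

/-- `X` has at most `s` nonzero rows. -/
def rowSparse {m n : Type*} (X : Matrix m n ℝ) (s : ℕ) : Prop :=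
  {i | X i ≠ 0}.ncard ≤ s

/-- Column submatrix of `A` with columns indexed by `S`. -/
def colSub {M N : ℕ} (A : Matrix (Fin M) (Fin N) ℝ) (S : Finset (Fin N)) :
    Matrix (Fin M) {j // j ∈ S} ℝ :=
  A.submatrix id (fun j => (j : Fin N))

/-- `D` is the Moore–Penrose pseudo-inverse of `A` (the four Penrose conditions). -/
def IsPinv {m n : Type*} [Fintype m] [Fintype n] (A : Matrix m n ℝ) (D : Matrix n m ℝ) : Prop :=
  A * D * A = A ∧ D * A * D = D ∧ (A * D)ᵀ = A * D ∧ (D * A)ᵀ = D * A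

/-- Restricted isometry property of order `s` with constant `δ`. -/
def RIP {M N : ℕ} (A : Matrix (Fin M) (Fin N) ℝ) (s : ℕ) (δ : ℝ) : Prop :=
  ∀ x : Fin N → ℝ, {i | x i ≠ 0}.ncard ≤ s →
    (1 - δ) * (∑ i, (x i) ^ 2) ≤ (∑ i, (A.mulVec x i) ^ 2) ∧
      (∑ i, (A.mulVec x i) ^ 2) ≤ (1 + δ) * (∑ i, (x i) ^ 2)

namespace Helper

variable {m n : Type*} [Fintype m] [Fintype n]

noncomputable def msq (X : Matrix m n ℝ) : ℝ := ∑ i, ∑ j, (X i j) ^ 2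

noncomputable def mip (X Y : Matrix m n ℝ) : ℝ := ∑ i, ∑ j, X i j * Y i j

lemma msq_nonneg (X : Matrix m n ℝ) : 0 ≤ msq X :=
  Finset.sum_nonneg fun _ _ => Finset.sum_nonneg fun _ _ => sq_nonneg _

lemma frob_eq (X : Matrix m n ℝ) : frob X = Real.sqrt (msq X) := rfl

lemma frob_nonneg (X : Matrix m n ℝ) : 0 ≤ frob X := Real.sqrt_nonneg _

lemma frob_sq (X : Matrix m n ℝ) : frob X ^ 2 = msq X := Real.sq_sqrt (msq_nonneg X)

lemma frob_le_frob {X Y : Matrix m n ℝ} (h : msq X ≤ msq Y) : frob X ≤ frob Y :=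
  Real.sqrt_le_sqrt h

lemma frob_le_of_sq_le {X : Matrix m n ℝ} {c : ℝ} (hc : 0 ≤ c) (h : msq X ≤ c ^ 2) :
    frob X ≤ c := by
  rw [frob_eq]
  calc Real.sqrt (msq X) ≤ Real.sqrt (c ^ 2) := Real.sqrt_le_sqrt h
  _ = c := Real.sqrt_sq hc

lemma mip_self (X : Matrix m n ℝ) : mip X X = msq X := by
  simp [mip, msq, pow_two]

lemma mip_comm (X Y : Matrix m n ℝ) : mip X Y = mip Y X := by
  simp [mip, mul_comm]

lemma mip_le (X Y : Matrix m n ℝ) : mip X Y ≤ frob X * frob Y := by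
  have h1 : mip X Y = ∑ p : m × n, X p.1 p.2 * Y p.1 p.2 := by
    rw [mip, Fintype.sum_prod_type]
  have h2 : msq X = ∑ p : m × n, (X p.1 p.2) ^ 2 := by
    rw [msq, Fintype.sum_prod_type]
  have h3 : msq Y = ∑ p : m × n, (Y p.1 p.2) ^ 2 := by
    rw [msq, Fintype.sum_prod_type]
  have := Finset.sum_mul_sq_le_sq_mul_sq Finset.univ (fun p : m × n => X p.1 p.2)
      (fun p : m × n => Y p.1 p.2)
  have h4 : (mip X Y) ^ 2 ≤ msq X * msq Y := by rw [h1, h2, h3]; exact this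
  calc mip X Y ≤ |mip X Y| := le_abs_self _
  _ = Real.sqrt ((mip X Y)^2) := (Real.sqrt_sq_eq_abs _).symm
  _ ≤ Real.sqrt ((frob X * frob Y)^2) := Real.sqrt_le_sqrt (by rw [mul_pow, frob_sq, frob_sq]; exact h4)
  _ = frob X * frob Y := Real.sqrt_sq (mul_nonneg (frob_nonneg X) (frob_nonneg Y))

lemma msq_add (X Y : Matrix m n ℝ) : msq (X + Y) = msq X + 2 * mip X Y + msq Y := by
  simp only [msq, mip, Matrix.add_apply, Finset.mul_sum, ← Finset.sum_add_distrib]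
  congr 1; ext i; congr 1; ext j; ring

lemma frob_add_le (X Y : Matrix m n ℝ) : frob (X + Y) ≤ frob X + frob Y := by
  apply frob_le_of_sq_le (add_nonneg (frob_nonneg X) (frob_nonneg Y))
  rw [msq_add, add_sq, frob_sq, frob_sq]
  have := mip_le X Y
  nlinarith
  
lemma frob_neg (X : Matrix m n ℝ) : frob (-X) = frob X := by
  simp [frob]

lemma frob_add3_le (X Y Z : Matrix m n ℝ) :
    frob (X + Y + Z) ≤ frob X + frob Y + frob Z :=
  (frob_add_le _ _).trans (by gcongr; exact frob_add_le _ _)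

end Helper

namespace Helper

open scoped Classical

lemma restrict_apply {m n : Type*} (X : Matrix m n ℝ) (S : Set m) (i : m) (j : n) :
    restrictRows X S i j = if i ∈ S then X i j else 0 := Set.indicator_apply _ _ _

/-- row support -/
def rs {m n : Type*} (X : Matrix m n ℝ) : Set m := {i | X i ≠ 0}

lemma rs_restrict {m n : Type*} (X : Matrix m n ℝ) (S : Set m) :
    rs (restrictRows X S) ⊆ S := by
  intro i hi
  by_contra h
  apply hi
  ext j
  simp [restrict_apply, h]

lemma restrict_eq_restrict {m n : Type*} (X : Matrix m n ℝ) (S S' : Set m)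
    (h : ∀ i, X i ≠ 0 → (i ∈ S ↔ i ∈ S')) : restrictRows X S = restrictRows X S' := by
  ext i j
  rcases eq_or_ne (X i) 0 with h0 | h0
  · have : X i j = 0 := by rw [h0]; rfl
    simp [restrict_apply, this]
  · simp [restrict_apply, h i h0]

lemma restrict_add_compl {m n : Type*} (X : Matrix m n ℝ) (S : Set m) :
    restrictRows X S + restrictRows X {i | i ∉ S} = X := by
  ext i j
  by_cases h : i ∈ S <;> simp [Matrix.add_apply, restrict_apply, h]

variable {m n : Type*} [Fintype m] [Fintype n]

lemma msq_restrict_le (X : Matrix m n ℝ) (S : Set m) :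
    msq (restrictRows X S) ≤ msq X := by
  apply Finset.sum_le_sum
  intro i _
  apply Finset.sum_le_sum
  intro j _
  rw [restrict_apply]
  by_cases h : i ∈ S <;> simp [h, sq_nonneg]

lemma frob_restrict_le (X : Matrix m n ℝ) (S : Set m) :
    frob (restrictRows X S) ≤ frob X := frob_le_frob (msq_restrict_le X S)

lemma msq_split (X : Matrix m n ℝ) (S : Set m) :
    msq X = msq (restrictRows X S) + msq (restrictRows X {i | i ∉ S}) := by
  simp only [msq, ← Finset.sum_add_distrib]
  congr 1; ext i; congr 1; ext j
  by_cases h : i ∈ S <;> simp [restrict_apply, h]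

/-- Extend a matrix indexed by a subtype to full rows, zero elsewhere. -/
noncomputable def extM {N L : ℕ} (S : Finset (Fin N)) (Y : Matrix {j // j ∈ S} (Fin L) ℝ) :
    Matrix (Fin N) (Fin L) ℝ := fun i j => if h : i ∈ S then Y ⟨i, h⟩ j else 0

noncomputable def extV {N : ℕ} (S : Finset (Fin N)) (y : {j // j ∈ S} → ℝ) : Fin N → ℝ :=
  fun i => if h : i ∈ S then y ⟨i, h⟩ else 0

noncomputable def subM {N L : ℕ} (S : Finset (Fin N)) (X : Matrix (Fin N) (Fin L) ℝ) :
    Matrix {j // j ∈ S} (Fin L) ℝ := fun i j => X i j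

lemma rs_extM {N L : ℕ} (S : Finset (Fin N)) (Y : Matrix {j // j ∈ S} (Fin L) ℝ) :
    rs (extM S Y) ⊆ ↑S := by
  intro i hi
  by_contra h
  apply hi
  ext j
  simp only [extM]
  rw [dif_neg (by simpa using h)]
  rfl

lemma extM_add {N L : ℕ} (S : Finset (Fin N)) (Y Z : Matrix {j // j ∈ S} (Fin L) ℝ) :
    extM S (Y + Z) = extM S Y + extM S Z := by
  ext i j
  simp only [extM, Matrix.add_apply]
  by_cases h : i ∈ S <;> simp [h]

lemma sum_subtype_split {N : ℕ} (S : Finset (Fin N)) (f : Fin N → ℝ)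
    (h0 : ∀ i ∉ S, f i = 0) : ∑ i, f i = ∑ i : {j // j ∈ S}, f i := by
  rw [Finset.sum_coe_sort S f]
  symm
  apply Finset.sum_subset (Finset.subset_univ S)
  intro x _ hx
  exact h0 x hx

lemma mulVec_extV {M N : ℕ} (A : Matrix (Fin M) (Fin N) ℝ) (S : Finset (Fin N))
    (y : {j // j ∈ S} → ℝ) :
    A.mulVec (extV S y) = (colSub A S).mulVec y := by
  ext i
  simp only [Matrix.mulVec, dotProduct, colSub, Matrix.submatrix_apply, id]
  rw [sum_subtype_split S (fun k => A i k * extV S y k)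
    (by intro k hk; simp [extV, dif_neg hk])]
  apply Finset.sum_congr rfl
  intro k _
  simp [extV, k.2]

lemma mul_extM {M N L : ℕ} (A : Matrix (Fin M) (Fin N) ℝ) (S : Finset (Fin N))
    (Y : Matrix {j // j ∈ S} (Fin L) ℝ) :
    A * extM S Y = colSub A S * Y := by
  ext i l
  simp only [Matrix.mul_apply, colSub, Matrix.submatrix_apply, id]
  rw [sum_subtype_split S (fun k => A i k * extM S Y k l)
    (by intro k hk; simp [extM, dif_neg hk])]
  apply Finset.sum_congr rfl
  intro k _
  simp [extM, k.2]

lemma mul_eq_colSub_mul_subM {M N L : ℕ} (A : Matrix (Fin M) (Fin N) ℝ) (S : Finset (Fin N))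
    (X : Matrix (Fin N) (Fin L) ℝ) (h : rs X ⊆ ↑S) :
    A * X = colSub A S * subM S X := by
  rw [← mul_extM]
  congr 1
  ext i j
  simp only [extM, subM]
  by_cases hi : i ∈ S
  · simp [hi]
  · rw [dif_neg hi]
    have : X i = 0 := by
      by_contra hx
      exact hi (h hx)
    rw [this]; rfl

lemma extM_subM {N L : ℕ} (S : Finset (Fin N)) (X : Matrix (Fin N) (Fin L) ℝ)
    (h : rs X ⊆ ↑S) : extM S (subM S X) = X := by
  ext i j
  simp only [extM, subM]
  by_cases hi : i ∈ S
  · simp [hi]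
  · rw [dif_neg hi]
    have : X i = 0 := by
      by_contra hx
      exact hi (h hx)
    rw [this]; rfl

section RIPsec

variable {M N L R K : ℕ} {A : Matrix (Fin M) (Fin N) ℝ} {δ : ℝ}
  (hδ0 : 0 ≤ δ) (hδ : δ < 1) (hRIP : RIP A (R + K) δ)

lemma col_rs {X : Matrix (Fin N) (Fin L) ℝ} (l : Fin L) :
    {i | X i l ≠ 0} ⊆ rs X := by
  intro i hi
  simp only [rs, Set.mem_setOf_eq]
  intro h
  exact hi (congrFun h l)

lemma ncard_col_le {X : Matrix (Fin N) (Fin L) ℝ} (l : Fin L) :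
    {i | X i l ≠ 0}.ncard ≤ (rs X).ncard :=
  Set.ncard_le_ncard (col_rs l) (Set.toFinite _)

lemma mul_apply_col {X : Matrix (Fin N) (Fin L) ℝ} (i : Fin M) (l : Fin L) :
    (A * X) i l = A.mulVec (fun k => X k l) i := rfl

include hRIP in
lemma ripM_lower {X : Matrix (Fin N) (Fin L) ℝ} (h : (rs X).ncard ≤ R + K) :
    (1 - δ) * msq X ≤ msq (A * X) := by
  have key : ∀ l : Fin L, (1 - δ) * (∑ i, (X i l) ^ 2) ≤ ∑ i, ((A * X) i l) ^ 2 := by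
    intro l
    have := (hRIP (fun k => X k l) ((ncard_col_le l).trans h)).1
    simpa [mul_apply_col] using this
  have h1 : msq (A * X) = ∑ l, ∑ i, ((A * X) i l) ^ 2 := Finset.sum_comm
  have h2 : msq X = ∑ l, ∑ i, (X i l) ^ 2 := Finset.sum_comm
  rw [h1, h2, Finset.mul_sum]
  exact Finset.sum_le_sum fun l _ => key l

include hRIP in
lemma ripM_upper {X : Matrix (Fin N) (Fin L) ℝ} (h : (rs X).ncard ≤ R + K) :
    msq (A * X) ≤ (1 + δ) * msq X := by
  have key : ∀ l : Fin L, (∑ i, ((A * X) i l) ^ 2) ≤ (1 + δ) * ∑ i, (X i l) ^ 2 := by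
    intro l
    have := (hRIP (fun k => X k l) ((ncard_col_le l).trans h)).2
    simpa [mul_apply_col] using this
  have h1 : msq (A * X) = ∑ l, ∑ i, ((A * X) i l) ^ 2 := Finset.sum_comm
  have h2 : msq X = ∑ l, ∑ i, (X i l) ^ 2 := Finset.sum_comm
  rw [h1, h2, Finset.mul_sum]
  exact Finset.sum_le_sum fun l _ => key l

include hRIP in
lemma northo_vec {u v : Fin N → ℝ}
    (hd : ∀ i, u i = 0 ∨ v i = 0)
    (hc : {i | u i ≠ 0}.ncard + {i | v i ≠ 0}.ncard ≤ R + K) :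
    2 * (∑ i, A.mulVec u i * A.mulVec v i) ≤ δ * ((∑ i, u i ^ 2) + ∑ i, v i ^ 2) := by
  have hUV : (∑ i, u i * v i) = 0 :=
    Finset.sum_eq_zero fun i _ => by rcases hd i with h | h <;> simp [h]
  have hsub : ∀ w : Fin N → ℝ, (∀ i, u i = 0 → v i = 0 → w i = 0) →
      {i | w i ≠ 0}.ncard ≤ R + K := by
    intro w hw
    refine le_trans (Set.ncard_le_ncard ?_ ((Set.toFinite _).union (Set.toFinite _)))
      (le_trans (Set.ncard_union_le _ _) hc)
    intro i hi
    simp only [Set.mem_setOf_eq, Set.mem_union]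
    by_contra h
    push_neg at h
    exact hi (hw i h.1 h.2)
  have hp := hRIP (u + v) (hsub _ (fun i h1 h2 => by simp [h1, h2]))
  have hm := hRIP (u - v) (hsub _ (fun i h1 h2 => by simp [h1, h2]))
  simp only [Matrix.mulVec_add, Matrix.mulVec_sub, Pi.add_apply, Pi.sub_apply] at hp hm
  have e1 : (∑ i, (u i + v i) ^ 2) = (∑ i, u i ^ 2) + ∑ i, v i ^ 2 := by
    calc (∑ i, (u i + v i) ^ 2) = ∑ i, (u i ^ 2 + v i ^ 2 + 2 * (u i * v i)) :=
          Finset.sum_congr rfl fun i _ => by ring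
    _ = ((∑ i, u i ^ 2) + ∑ i, v i ^ 2) + 2 * ∑ i, u i * v i := by
          rw [Finset.sum_add_distrib, Finset.sum_add_distrib, ← Finset.mul_sum]
    _ = (∑ i, u i ^ 2) + ∑ i, v i ^ 2 := by rw [hUV]; ring
  have e2 : (∑ i, (u i - v i) ^ 2) = (∑ i, u i ^ 2) + ∑ i, v i ^ 2 := by
    calc (∑ i, (u i - v i) ^ 2) = ∑ i, (u i ^ 2 + v i ^ 2 - 2 * (u i * v i)) :=
          Finset.sum_congr rfl fun i _ => by ring
    _ = ((∑ i, u i ^ 2) + ∑ i, v i ^ 2) - 2 * ∑ i, u i * v i := by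
          rw [Finset.sum_sub_distrib, Finset.sum_add_distrib, ← Finset.mul_sum]
    _ = (∑ i, u i ^ 2) + ∑ i, v i ^ 2 := by rw [hUV]; ring
  have ep : (∑ i, (A.mulVec u i + A.mulVec v i) ^ 2) =
      ((∑ i, (A.mulVec u i) ^ 2) + ∑ i, (A.mulVec v i) ^ 2)
        + 2 * ∑ i, A.mulVec u i * A.mulVec v i := by
    calc (∑ i, (A.mulVec u i + A.mulVec v i) ^ 2)
        = ∑ i, ((A.mulVec u i) ^ 2 + (A.mulVec v i) ^ 2 + 2 * (A.mulVec u i * A.mulVec v i)) :=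
          Finset.sum_congr rfl fun i _ => by ring
    _ = ((∑ i, (A.mulVec u i) ^ 2) + ∑ i, (A.mulVec v i) ^ 2)
          + 2 * ∑ i, A.mulVec u i * A.mulVec v i := by
          rw [Finset.sum_add_distrib, Finset.sum_add_distrib, ← Finset.mul_sum]
  have em : (∑ i, (A.mulVec u i - A.mulVec v i) ^ 2) =
      ((∑ i, (A.mulVec u i) ^ 2) + ∑ i, (A.mulVec v i) ^ 2)
        - 2 * ∑ i, A.mulVec u i * A.mulVec v i := by
    calc (∑ i, (A.mulVec u i - A.mulVec v i) ^ 2)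
        = ∑ i, ((A.mulVec u i) ^ 2 + (A.mulVec v i) ^ 2 - 2 * (A.mulVec u i * A.mulVec v i)) :=
          Finset.sum_congr rfl fun i _ => by ring
    _ = ((∑ i, (A.mulVec u i) ^ 2) + ∑ i, (A.mulVec v i) ^ 2)
          - 2 * ∑ i, A.mulVec u i * A.mulVec v i := by
          rw [Finset.sum_sub_distrib, Finset.sum_add_distrib, ← Finset.mul_sum]
  rw [e1, ep] at hp
  rw [e2, em] at hm
  linarith [hp.2, hm.1]

include hRIP hδ0 in
lemma northo_vec_prod {u v : Fin N → ℝ}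
    (hd : ∀ i, u i = 0 ∨ v i = 0)
    (hc : {i | u i ≠ 0}.ncard + {i | v i ≠ 0}.ncard ≤ R + K) :
    (∑ i, A.mulVec u i * A.mulVec v i) ≤
      δ * Real.sqrt (∑ i, u i ^ 2) * Real.sqrt (∑ i, v i ^ 2) := by
  have hsu : (0:ℝ) ≤ ∑ i, u i ^ 2 := Finset.sum_nonneg fun _ _ => sq_nonneg _
  have hsv : (0:ℝ) ≤ ∑ i, v i ^ 2 := Finset.sum_nonneg fun _ _ => sq_nonneg _
  rcases eq_or_lt_of_le hsu with h0 | hsu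
  · have hu : ∀ i, u i = 0 := by
      intro i
      have := (Finset.sum_eq_zero_iff_of_nonneg (fun i _ => sq_nonneg (u i))).1 h0.symm i
        (Finset.mem_univ i)
      exact pow_eq_zero_iff (by norm_num) |>.1 this
    have : A.mulVec u = 0 := by
      ext i; simp [Matrix.mulVec, dotProduct, hu]
    rw [this]
    simp only [Pi.zero_apply, zero_mul, Finset.sum_const_zero]
    positivity
  rcases eq_or_lt_of_le hsv with h0 | hsv
  · have hv : ∀ i, v i = 0 := by
      intro i
      have := (Finset.sum_eq_zero_iff_of_nonneg (fun i _ => sq_nonneg (v i))).1 h0.symm i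
        (Finset.mem_univ i)
      exact pow_eq_zero_iff (by norm_num) |>.1 this
    have : A.mulVec v = 0 := by
      ext i; simp [Matrix.mulVec, dotProduct, hv]
    rw [this]
    simp only [Pi.zero_apply, mul_zero, Finset.sum_const_zero]
    positivity
  set su := ∑ i, u i ^ 2
  set sv := ∑ i, v i ^ 2
  set c : ℝ := Real.sqrt (Real.sqrt sv / Real.sqrt su) with hcdef
  have hsqu : 0 < Real.sqrt su := Real.sqrt_pos.2 hsu
  have hsqv : 0 < Real.sqrt sv := Real.sqrt_pos.2 hsv
  have hcpos : 0 < c := Real.sqrt_pos.2 (div_pos hsqv hsqu)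
  have hc2 : c ^ 2 = Real.sqrt sv / Real.sqrt su := Real.sq_sqrt (le_of_lt (div_pos hsqv hsqu))
  have hmvs : ∀ (a : ℝ) (w : Fin N → ℝ), A.mulVec (a • w) = a • A.mulVec w := by
    intro a w
    ext i
    simp only [Matrix.mulVec, dotProduct, Pi.smul_apply, smul_eq_mul, Finset.mul_sum]
    exact Finset.sum_congr rfl fun k _ => by ring
  have key := northo_vec hRIP (u := c • u) (v := c⁻¹ • v) ?_ ?_
  · have h1 : A.mulVec (c • u) = c • A.mulVec u := hmvs c u
    have h2 : A.mulVec (c⁻¹ • v) = c⁻¹ • A.mulVec v := hmvs c⁻¹ v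
    rw [h1, h2] at key
    have e1 : (∑ i, (c • A.mulVec u) i * (c⁻¹ • A.mulVec v) i) =
        ∑ i, A.mulVec u i * A.mulVec v i := by
      apply Finset.sum_congr rfl
      intro i _
      simp only [Pi.smul_apply, smul_eq_mul]
      linear_combination (A.mulVec u i * A.mulVec v i) * mul_inv_cancel₀ hcpos.ne'
    have e2 : (∑ i, ((c • u) i) ^ 2) = c ^ 2 * su := by
      rw [Finset.mul_sum]
      apply Finset.sum_congr rfl
      intro i _
      simp only [Pi.smul_apply, smul_eq_mul]
      ring
    have e3 : (∑ i, ((c⁻¹ • v) i) ^ 2) = (c ^ 2)⁻¹ * sv := by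
      rw [Finset.mul_sum]
      apply Finset.sum_congr rfl
      intro i _
      simp only [Pi.smul_apply, smul_eq_mul]
      rw [mul_pow, inv_pow]
    rw [e1, e2, e3, hc2] at key
    have hmu : Real.sqrt su * Real.sqrt su = su := Real.mul_self_sqrt hsu.le
    have hmv2 : Real.sqrt sv * Real.sqrt sv = sv := Real.mul_self_sqrt hsv.le
    have egeo : Real.sqrt sv / Real.sqrt su * su = Real.sqrt su * Real.sqrt sv := by
      rw [div_mul_eq_mul_div, div_eq_iff hsqu.ne']
      linear_combination (-Real.sqrt sv) * hmu
    have egeo2 : (Real.sqrt sv / Real.sqrt su)⁻¹ * sv = Real.sqrt su * Real.sqrt sv := by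
      rw [inv_div, div_mul_eq_mul_div, div_eq_iff hsqv.ne']
      linear_combination (-Real.sqrt su) * hmv2
    rw [egeo, egeo2] at key
    linarith [key]
  · intro i
    rcases hd i with h | h
    · left; simp [h]
    · right; simp [h]
  · refine le_trans (add_le_add (Set.ncard_le_ncard ?_ (Set.toFinite _))
      (Set.ncard_le_ncard ?_ (Set.toFinite _))) hc
    · intro i hi
      simp only [Set.mem_setOf_eq, Pi.smul_apply, smul_eq_mul] at hi ⊢
      intro h
      exact hi (by rw [h, mul_zero])
    · intro i hi
      simp only [Set.mem_setOf_eq, Pi.smul_apply, smul_eq_mul] at hi ⊢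
      intro h
      exact hi (by rw [h, mul_zero])

include hRIP hδ0 in
lemma northo_mat {Y Z : Matrix (Fin N) (Fin L) ℝ}
    (hd : ∀ i, Y i = 0 ∨ Z i = 0)
    (hc : (rs Y).ncard + (rs Z).ncard ≤ R + K) :
    mip (A * Y) (A * Z) ≤ δ * frob Y * frob Z := by
  have percol : ∀ l : Fin L, (∑ i, (A * Y) i l * (A * Z) i l) ≤
      δ * Real.sqrt (∑ k, (Y k l) ^ 2) * Real.sqrt (∑ k, (Z k l) ^ 2) := by
    intro l
    have hdl : ∀ i, Y i l = 0 ∨ Z i l = 0 := by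
      intro i
      rcases hd i with h | h
      · left; exact congrFun h l
      · right; exact congrFun h l
    have hcl : {i | Y i l ≠ 0}.ncard + {i | Z i l ≠ 0}.ncard ≤ R + K :=
      le_trans (add_le_add (ncard_col_le l) (ncard_col_le l)) hc
    have := northo_vec_prod hδ0 hRIP (u := fun k => Y k l) (v := fun k => Z k l) hdl hcl
    simpa [mul_apply_col] using this
  have h1 : mip (A * Y) (A * Z) = ∑ l, ∑ i, (A * Y) i l * (A * Z) i l := Finset.sum_comm
  rw [h1]
  calc (∑ l, ∑ i, (A * Y) i l * (A * Z) i l)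
      ≤ ∑ l : Fin L, δ * (Real.sqrt (∑ k, (Y k l) ^ 2) * Real.sqrt (∑ k, (Z k l) ^ 2)) := by
        apply Finset.sum_le_sum
        intro l _
        rw [← mul_assoc]
        exact percol l
  _ = δ * ∑ l : Fin L, Real.sqrt (∑ k, (Y k l) ^ 2) * Real.sqrt (∑ k, (Z k l) ^ 2) := by
        rw [Finset.mul_sum]
  _ ≤ δ * (Real.sqrt (∑ l, ∑ k, (Y k l) ^ 2) * Real.sqrt (∑ l, ∑ k, (Z k l) ^ 2)) := by
        apply mul_le_mul_of_nonneg_left _ hδ0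
        exact Real.sum_sqrt_mul_sqrt_le Finset.univ
          (fun l => Finset.sum_nonneg fun k _ => sq_nonneg _)
          (fun l => Finset.sum_nonneg fun k _ => sq_nonneg _)
  _ = δ * frob Y * frob Z := by
        rw [frob_eq, frob_eq, msq, msq]
        rw [show (∑ l, ∑ k, (Y k l) ^ 2) = ∑ k, ∑ l, (Y k l) ^ 2 from Finset.sum_comm]
        rw [show (∑ l, ∑ k, (Z k l) ^ 2) = ∑ k, ∑ l, (Z k l) ^ 2 from Finset.sum_comm]
        ring

end RIPsec

end Helper
namespace Helper

lemma sum3 {α β γ : Type*} [Fintype α] [Fintype β] [Fintype γ] (f : α → β → γ → ℝ) :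
    ∑ i, ∑ j, ∑ k, f i j k = ∑ k, ∑ j, ∑ i, f i j k := by
  calc ∑ i, ∑ j, ∑ k, f i j k
      = ∑ j, ∑ i, ∑ k, f i j k := Finset.sum_comm
  _ = ∑ j, ∑ k, ∑ i, f i j k := Finset.sum_congr rfl fun j _ => Finset.sum_comm
  _ = ∑ k, ∑ j, ∑ i, f i j k := Finset.sum_comm

lemma mip_mul {a b n : Type*} [Fintype a] [Fintype b] [Fintype n]
    (P : Matrix a b ℝ) (Y : Matrix b n ℝ) (Z : Matrix a n ℝ) :
    mip (P * Y) Z = mip Y (Pᵀ * Z) := by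
  simp only [mip, Matrix.mul_apply, Matrix.transpose_apply, Finset.sum_mul, Finset.mul_sum]
  rw [sum3 (fun i j k => P i k * Y k j * Z i j)]
  apply Finset.sum_congr rfl
  intro k _
  apply Finset.sum_congr rfl
  intro j _
  apply Finset.sum_congr rfl
  intro i _
  ring

/-- For a symmetric idempotent `P`, `msq (P*Y) = mip Y (P*Y)` and hence `msq (P*Y) ≤ msq Y`. -/
lemma proj_msq_le {a n : Type*} [Fintype a] [Fintype n]
    (P : Matrix a a ℝ) (hsym : Pᵀ = P) (hidem : P * P = P) (Y : Matrix a n ℝ) :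
    msq (P * Y) ≤ msq Y := by
  have h1 : msq (P * Y) = mip Y (P * Y) := by
    rw [← mip_self, mip_mul, hsym, ← Matrix.mul_assoc, hidem]
  have h2 : mip Y (P * Y) ≤ frob Y * frob (P * Y) := mip_le _ _
  rcases eq_or_lt_of_le (frob_nonneg (P * Y)) with h0 | h0
  · rw [← frob_sq, ← h0]
    norm_num
    exact msq_nonneg Y
  · have : frob (P * Y) * frob (P * Y) ≤ frob Y * frob (P * Y) := by
      calc frob (P * Y) * frob (P * Y) = msq (P * Y) := by rw [← frob_sq]; ring
      _ = mip Y (P * Y) := h1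
      _ ≤ frob Y * frob (P * Y) := h2
    have h3 : frob (P * Y) ≤ frob Y := le_of_mul_le_mul_right this h0
    rw [← frob_sq, ← frob_sq (X := Y)]
    exact pow_le_pow_left₀ (frob_nonneg _) h3 2

lemma proj_mip_eq {a n : Type*} [Fintype a] [Fintype n]
    (P : Matrix a a ℝ) (hsym : Pᵀ = P) (hidem : P * P = P) (Y : Matrix a n ℝ) :
    msq (P * Y) = mip Y (P * Y) := by
  rw [← mip_self, mip_mul, hsym, ← Matrix.mul_assoc, hidem]

end Helper

namespace Helper

section Pinv

variable {M N R K : ℕ} {A : Matrix (Fin M) (Fin N) ℝ} {δ : ℝ}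
  (hδ0 : 0 ≤ δ) (hδ : δ < 1) (hRIP : RIP A (R + K) δ)
  {S : Finset (Fin N)} (hcard : S.card ≤ R + K)
  {D : Matrix {j // j ∈ S} (Fin M) ℝ} (hD : IsPinv (colSub A S) D)

include hδ hRIP hcard in
lemma colSub_inj : ∀ y : {j // j ∈ S} → ℝ, (colSub A S).mulVec y = 0 → y = 0 := by
  intro y hy
  have hmv : A.mulVec (extV S y) = 0 := by rw [mulVec_extV, hy]
  have hsupp : {i | extV S y i ≠ 0}.ncard ≤ R + K := by
    refine le_trans (le_trans (Set.ncard_le_ncard ?_ S.finite_toSet) ?_) hcard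
    · intro i hi
      simp only [Set.mem_setOf_eq, extV] at hi
      by_contra h
      have h' : i ∉ S := by simpa using h
      rw [dif_neg h'] at hi
      exact hi rfl
    · rw [Set.ncard_coe_finset]
  have := (hRIP (extV S y) hsupp).1
  rw [hmv] at this
  have h0 : (1 - δ) * (∑ i, extV S y i ^ 2) ≤ 0 := by
    refine le_trans this (le_of_eq ?_)
    simp
  have hsum : (∑ i, extV S y i ^ 2) ≤ 0 := by
    have h1δ : (0:ℝ) < 1 - δ := by linarith
    nlinarith [h0, h1δ, Finset.sum_nonneg (fun i (_ : i ∈ Finset.univ) =>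
      sq_nonneg (extV S y i))]
  have hz : ∀ i, extV S y i = 0 := by
    intro i
    have := (Finset.sum_eq_zero_iff_of_nonneg (fun i _ => sq_nonneg (extV S y i))).1
      (le_antisymm hsum (Finset.sum_nonneg fun _ _ => sq_nonneg _)) i (Finset.mem_univ i)
    exact pow_eq_zero_iff (by norm_num) |>.1 this
  ext i
  have := hz i
  simp only [extV, i.2, dif_pos] at this
  simpa using this

include hδ hRIP hcard hD in
lemma pinv_one : D * colSub A S = 1 := by
  classical
  set M1 : Matrix {j // j ∈ S} {j // j ∈ S} ℝ := D * colSub A S - 1 with hM1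
  have h1 : colSub A S * M1 = 0 := by
    rw [hM1, Matrix.mul_sub, ← Matrix.mul_assoc, hD.1, Matrix.mul_one, sub_self]
  have h2 : M1 = 0 := by
    ext i k
    have hcol : (colSub A S).mulVec (fun j => M1 j k) = 0 := by
      ext r
      have : (colSub A S * M1) r k = 0 := by rw [h1]; rfl
      simpa [Matrix.mul_apply, Matrix.mulVec, dotProduct] using this
    have := colSub_inj hδ hRIP hcard _ hcol
    exact congrFun this i
  have := sub_eq_zero.mp h2
  exact this

include hδ0 hδ hRIP hcard hD in
lemma pinv_bound (Y : Matrix (Fin M) (Fin L) ℝ) :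
    (1 - δ) * msq (extM S (D * Y)) ≤ msq Y := by
  set U := extM S (D * Y) with hU
  have hAU : A * U = (colSub A S * D) * Y := by
    rw [hU, mul_extM, Matrix.mul_assoc]
  have hUcard : (rs U).ncard ≤ R + K := by
    refine le_trans (le_trans (Set.ncard_le_ncard (rs_extM S _) S.finite_toSet) ?_) hcard
    rw [Set.ncard_coe_finset]
  have hlow := ripM_lower hRIP hUcard
  set P := colSub A S * D with hP
  have hsym : Pᵀ = P := hD.2.2.1
  have hidem : P * P = P := by
    rw [hP, Matrix.mul_assoc, ← Matrix.mul_assoc D, hD.2.1]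
  have hle : msq (P * Y) ≤ msq Y := proj_msq_le P hsym hidem Y
  rw [hAU] at hlow
  exact le_trans hlow hle

include hδ0 hδ hRIP hD in
lemma pinv_cross_bound {L : ℕ} (Z : Matrix (Fin N) (Fin L) ℝ)
    (hdisj : ∀ i, i ∈ S → Z i = 0)
    (hc2 : S.card + (rs Z).ncard ≤ R + K) :
    (1 - δ) * frob (extM S (D * (A * Z))) ≤ δ * frob Z := by
  have hcard' : S.card ≤ R + K := le_trans (Nat.le_add_right _ _) hc2
  set U := extM S (D * (A * Z)) with hU
  have hAU : A * U = (colSub A S * D) * (A * Z) := by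
    rw [hU, mul_extM, Matrix.mul_assoc]
  have hUsub : rs U ⊆ ↑S := rs_extM S _
  have hUcard : (rs U).ncard ≤ R + K := by
    refine le_trans (le_trans (Set.ncard_le_ncard hUsub S.finite_toSet) ?_) hcard'
    rw [Set.ncard_coe_finset]
  have hlow := ripM_lower hRIP hUcard
  set P := colSub A S * D with hP
  have hsym : Pᵀ = P := hD.2.2.1
  have hidem : P * P = P := by
    rw [hP, Matrix.mul_assoc, ← Matrix.mul_assoc D, hD.2.1]
  have heq : msq (P * (A * Z)) = mip (A * Z) (P * (A * Z)) := proj_mip_eq P hsym hidem _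
  have hnor : mip (A * U) (A * Z) ≤ δ * frob U * frob Z := by
    apply northo_mat hδ0 hRIP
    · intro i
      by_cases h : i ∈ S
      · right; exact hdisj i h
      · left
        by_contra hne
        exact h (hUsub hne)
    · refine le_trans (add_le_add (le_trans (Set.ncard_le_ncard hUsub S.finite_toSet)
        (le_of_eq (Set.ncard_coe_finset S))) le_rfl) hc2
  have hkey : (1 - δ) * msq U ≤ δ * frob U * frob Z := by
    calc (1 - δ) * msq U ≤ msq (A * U) := by rw [hAU] at hlow ⊢; exact hlow
    _ = mip (A * Z) (A * U) := by rw [hAU, heq]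
    _ = mip (A * U) (A * Z) := mip_comm _ _
    _ ≤ δ * frob U * frob Z := hnor
  rcases eq_or_lt_of_le (frob_nonneg U) with h0 | h0
  · rw [← h0, mul_zero]
    exact mul_nonneg hδ0 (frob_nonneg Z)
  · have hmsq : msq U = frob U * frob U := by rw [← frob_sq]; ring
    rw [hmsq] at hkey
    have : (1 - δ) * frob U * frob U ≤ δ * frob Z * frob U := by
      calc (1 - δ) * frob U * frob U = (1 - δ) * (frob U * frob U) := by ring
      _ ≤ δ * frob U * frob Z := hkey
      _ = δ * frob Z * frob U := by ring
    exact le_of_mul_le_mul_right this h0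

end Pinv

end Helper

namespace Helper

lemma restrict_add {m n : Type*} (X Y : Matrix m n ℝ) (P : Set m) :
    restrictRows (X + Y) P = restrictRows X P + restrictRows Y P := by
  ext i j
  by_cases h : i ∈ P <;> simp [restrict_apply, Matrix.add_apply, h]

lemma restrict_restrict {m n : Type*} (X : Matrix m n ℝ) (P Q : Set m) (h : P ⊆ Q) :
    restrictRows (restrictRows X Q) P = restrictRows X P := by
  ext i j
  by_cases hi : i ∈ P
  · simp [restrict_apply, hi, h hi]
  · simp [restrict_apply, hi]

lemma restrict_zero_of {m n : Type*} (X : Matrix m n ℝ) (P : Set m)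
    (h : ∀ i ∈ P, X i = 0) : restrictRows X P = 0 := by
  ext i j
  by_cases hi : i ∈ P
  · simp only [restrict_apply, if_pos hi]
    exact congrFun (h i hi) j
  · simp [restrict_apply, hi]

lemma msq_restrict_finset {N L : ℕ} (X : Matrix (Fin N) (Fin L) ℝ) (F : Finset (Fin N)) :
    msq (restrictRows X (↑F : Set (Fin N))) = ∑ i ∈ F, ∑ j, X i j ^ 2 := by
  rw [msq]
  rw [show (∑ i, ∑ j, (restrictRows X (↑F : Set (Fin N))) i j ^ 2)
      = ∑ i, if i ∈ F then (∑ j, X i j ^ 2) else 0 from ?_]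
  · rw [Finset.sum_ite_mem, Finset.univ_inter]
  · apply Finset.sum_congr rfl
    intro i _
    by_cases hi : i ∈ F
    · simp [restrict_apply, hi]
    · simp [restrict_apply, hi]

lemma rowNorm_sq {N L : ℕ} (X : Matrix (Fin N) (Fin L) ℝ) (i : Fin N) :
    rowNorm X i ^ 2 = ∑ j, X i j ^ 2 :=
  Real.sq_sqrt (Finset.sum_nonneg fun _ _ => sq_nonneg _)

lemma select_lemma {N L : ℕ} (V : Matrix (Fin N) (Fin L) ℝ) (S That : Finset (Fin N))
    (hsel : ∀ i ∈ That, ∀ j ∉ That, rowNorm V j ≤ rowNorm V i)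
    (hcard : S.card ≤ That.card) :
    (∑ i ∈ S \ That, ∑ j, V i j ^ 2) ≤ ∑ i ∈ That \ S, ∑ j, V i j ^ 2 := by
  have hcd : (S \ That).card ≤ (That \ S).card := by
    have h1 : (S \ That).card + (S ∩ That).card = S.card := Finset.card_sdiff_add_card_inter S That
    have h2 : (That \ S).card + (That ∩ S).card = That.card :=
      Finset.card_sdiff_add_card_inter That S
    have h3 : (S ∩ That).card = (That ∩ S).card := by rw [Finset.inter_comm]
    omega
  by_cases hne : (S \ That).Nonempty
  · have hne2 : (That \ S).Nonempty := by
      rw [← Finset.card_pos] at hne ⊢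
      omega
    obtain ⟨b, hb, hmin⟩ := (That \ S).exists_min_image (fun i => ∑ j, V i j ^ 2) hne2
    have hbT : b ∈ That := (Finset.mem_sdiff.1 hb).1
    have hbnn : (0:ℝ) ≤ ∑ j, V b j ^ 2 := Finset.sum_nonneg fun _ _ => sq_nonneg _
    have hub : ∀ i ∈ S \ That, (∑ j, V i j ^ 2) ≤ ∑ j, V b j ^ 2 := by
      intro i hi
      have hiT : i ∉ That := (Finset.mem_sdiff.1 hi).2
      have := hsel b hbT i hiT
      rw [← rowNorm_sq, ← rowNorm_sq]
      exact pow_le_pow_left₀ (Real.sqrt_nonneg _) this 2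
    calc (∑ i ∈ S \ That, ∑ j, V i j ^ 2)
        ≤ (S \ That).card • (∑ j, V b j ^ 2) := Finset.sum_le_card_nsmul _ _ _ hub
    _ ≤ (That \ S).card • (∑ j, V b j ^ 2) := by
        simp only [nsmul_eq_mul]
        exact mul_le_mul_of_nonneg_right (Nat.cast_le.2 hcd) hbnn
    _ ≤ ∑ i ∈ That \ S, ∑ j, V i j ^ 2 := Finset.card_nsmul_le_sum _ _ _ fun i hi => hmin i hi
  · rw [Finset.not_nonempty_iff_eq_empty] at hne
    rw [hne, Finset.sum_empty]
    exact Finset.sum_nonneg fun i _ => Finset.sum_nonneg fun _ _ => sq_nonneg _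

lemma scale_le {x y c : ℝ} (hx : 0 ≤ x) (hcx : 0 ≤ c * x) (h : (c * x) ^ 2 ≤ y ^ 2) (hy : 0 ≤ y) :
    c * x ≤ y := by
  nlinarith

end Helper

namespace Helper

lemma rs_restrict_subset {m n : Type*} (X : Matrix m n ℝ) (P : Set m) :
    rs (restrictRows X P) ⊆ rs X := by
  intro i hi
  intro h0
  apply hi
  ext j
  rw [restrict_apply]
  have : X i j = 0 := congrFun h0 j
  by_cases hp : i ∈ P <;> simp [hp, this]

end Helper

set_option maxHeartbeats 1000000 in
open Helper in
theorem stmt15 {M N L R K : ℕ} (A : Matrix (Fin M) (Fin N) ℝ) (δ : ℝ)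
    (hδ0 : 0 ≤ δ) (hδ : δ < 1) (hRIP : RIP A (R + K) δ)
    (X : Matrix (Fin N) (Fin L) ℝ)
    (T : Finset (Fin N)) (hTK : T.card ≤ K)
    (hsupp : ∀ i, X i ≠ 0 → i ∈ T)
    (Γ : Finset (Fin N)) (hΓ : Γ.card ≤ R)
    (DΓ : Matrix {j // j ∈ Γ} (Fin M) ℝ) (hDΓ : IsPinv (colSub A Γ) DΓ)
    (W B : Matrix (Fin M) (Fin L) ℝ) (hB : B = A * X + W)
    (V : Matrix (Fin N) (Fin L) ℝ)
    (hV : V = fun i j => if h : i ∈ Γ then (DΓ * B) ⟨i, h⟩ j else 0)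
    (That : Finset (Fin N)) (hThatΓ : That ⊆ Γ) (hThatK : That.card = K)
    (hsel : ∀ i ∈ That, ∀ j ∉ That, rowNorm V j ≤ rowNorm V i)
    (DT : Matrix {j // j ∈ That} (Fin M) ℝ) (hDT : IsPinv (colSub A That) DT)
    (Xhat : Matrix (Fin N) (Fin L) ℝ)
    (hXhat : Xhat = fun i j => if h : i ∈ That then (DT * B) ⟨i, h⟩ j else 0)
    (Ti : Finset (Fin N)) (Xhati : Matrix (Fin N) (Fin L) ℝ)
    (hXhati : ∀ i, i ∉ Ti → Xhati i = 0)
    (hXΓ : frob (restrictRows X {i | i ∉ Γ}) ≠ 0)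
    (hXTi : frob (restrictRows X {i | i ∉ Ti}) ≠ 0)
    (ηi ζ : ℝ)
    (hη : ηi = frob (restrictRows X {i | i ∉ Γ}) / frob (restrictRows X {i | i ∉ Ti}))
    (hζ : ζ = frob W / frob (restrictRows X {i | i ∉ Γ})) :
    frob (X - Xhat) ≤ ((1 + δ + 3 * ζ) / (1 - δ) ^ 2) * frob (restrictRows X {i | i ∉ Γ}) ∧
    (ηi < (1 - δ) ^ 2 / (1 + δ + 3 * ζ) →
      ((1 - δ) ^ 2 / ((1 + δ + 3 * ζ) * ηi)) ^ 2 * (frob (X - Xhat)) ^ 2 ≤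
        (frob (X - Xhati)) ^ 2) := by
  classical
  have hΓRK : Γ.card ≤ R + K := le_trans hΓ (Nat.le_add_right R K)
  have hKR : K ≤ R := by
    have := le_trans (Finset.card_le_card hThatΓ) hΓ
    omega
  have hThatRK : That.card ≤ R + K := by omega
  have h1δ : (0:ℝ) < 1 - δ := by linarith
  set Xc := restrictRows X {i | i ∉ Γ} with hXcdef
  set a := frob Xc with hadef
  set w := frob W with hwdef
  have ha0 : 0 < a := lt_of_le_of_ne (frob_nonneg _) (Ne.symm hXΓ)
  have hw0 : 0 ≤ w := frob_nonneg _
  have hrsX : rs X ⊆ ↑T := fun i hi => Finset.mem_coe.2 (hsupp i hi)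
  have hrsXn : (rs X).ncard ≤ K := by
    refine le_trans (le_trans (Set.ncard_le_ncard hrsX T.finite_toSet) ?_) hTK
    rw [Set.ncard_coe_finset]
  -- Stage 1 : V = XΓ + Eγ
  set XΓ := restrictRows X {i | i ∈ Γ} with hXGdef
  have hsplit : XΓ + Xc = X := restrict_add_compl X {i | i ∈ Γ}
  have hrsXc : (rs Xc).ncard ≤ K :=
    le_trans (Set.ncard_le_ncard (rs_restrict_subset X _) (Set.toFinite _)) hrsXn
  have hXΓrs : rs XΓ ⊆ ↑Γ := rs_restrict X {i | i ∈ Γ}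
  have hB' : B = A * XΓ + (A * Xc + W) := by
    rw [hB, ← hsplit, Matrix.mul_add, add_assoc]
  set Eγ := extM Γ (DΓ * (A * Xc + W)) with hEdef
  have hDΓ1 : DΓ * colSub A Γ = 1 := pinv_one hδ hRIP hΓRK hDΓ
  have hfix : extM Γ (DΓ * (A * XΓ)) = XΓ := by
    rw [mul_eq_colSub_mul_subM A Γ XΓ hXΓrs, ← Matrix.mul_assoc, hDΓ1, Matrix.one_mul,
      extM_subM Γ XΓ hXΓrs]
  have hVext : V = extM Γ (DΓ * B) := hV
  have hVX : V = XΓ + Eγ := by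
    rw [hVext, hB', Matrix.mul_add, extM_add, hfix]
  -- bound on Eγ
  set E1 := extM Γ (DΓ * (A * Xc)) with hE1def
  set E2 := extM Γ (DΓ * W) with hE2def
  have hEsplit : Eγ = E1 + E2 := by rw [hEdef, Matrix.mul_add, extM_add]
  have hXcdisj : ∀ i ∈ Γ, Xc i = 0 := by
    intro i hi
    funext j
    rw [hXcdef]
    simp [restrict_apply, hi]
  have hE1b : (1 - δ) * frob E1 ≤ δ * a :=
    pinv_cross_bound hδ0 hδ hRIP hDΓ Xc hXcdisj (add_le_add hΓ hrsXc)
  have hE2m : (1 - δ) * msq E2 ≤ msq W := pinv_bound hδ0 hδ hRIP hΓRK hDΓ W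
  have hE2b : (1 - δ) * frob E2 ≤ w := by
    apply scale_le (frob_nonneg E2) (mul_nonneg h1δ.le (frob_nonneg E2)) _ hw0
    have h1 : ((1 - δ) * frob E2) ^ 2 = (1 - δ) ^ 2 * msq E2 := by rw [mul_pow, frob_sq]
    have h2 : w ^ 2 = msq W := frob_sq W
    nlinarith [msq_nonneg E2, h1δ]
  have hEb : (1 - δ) * frob Eγ ≤ δ * a + w := by
    have ht : frob Eγ ≤ frob E1 + frob E2 := by
      rw [hEsplit]; exact frob_add_le E1 E2
    have ht2 := mul_le_mul_of_nonneg_left ht h1δ.le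
    linarith [ht2, hE1b, hE2b]
  -- Stage 2 : selection
  set Sfin := T ∩ Γ with hSfin
  have hSfincard : Sfin.card ≤ That.card := by
    rw [hThatK]
    exact le_trans (Finset.card_le_card Finset.inter_subset_left) hTK
  have hselsum := select_lemma V Sfin That hsel hSfincard
  set P1 : Set (Fin N) := ↑(Sfin \ That) with hP1def
  set P2 : Set (Fin N) := ↑(That \ Sfin) with hP2def
  have hP1Γ : P1 ⊆ {i | i ∈ Γ} := by
    intro i hi
    rw [hP1def, Finset.mem_coe, Finset.mem_sdiff, hSfin, Finset.mem_inter] at hi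
    exact hi.1.2
  have hXP1 : restrictRows X P1 + restrictRows Eγ P1 = restrictRows V P1 := by
    rw [hVX, restrict_add, hXGdef, restrict_restrict X P1 {i | i ∈ Γ} hP1Γ]
  have hVP2E : restrictRows V P2 = restrictRows Eγ P2 := by
    rw [hVX, restrict_add]
    have hz : restrictRows XΓ P2 = 0 := by
      apply restrict_zero_of
      intro i hi
      rw [hP2def, Finset.mem_coe, Finset.mem_sdiff] at hi
      have hiΓ : i ∈ Γ := hThatΓ hi.1
      funext j
      rw [hXGdef, restrict_apply, if_pos (show i ∈ ({i | i ∈ Γ} : Set (Fin N)) from hiΓ)]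
      by_contra h0
      have hX0 : X i ≠ 0 := by
        intro hh
        exact h0 (congrFun hh j)
      exact hi.2 (by rw [hSfin, Finset.mem_inter]; exact ⟨hsupp i hX0, hiΓ⟩)
    rw [hz, zero_add]
  have hVsel : msq (restrictRows V P1) ≤ msq (restrictRows V P2) := by
    rw [hP1def, hP2def, msq_restrict_finset, msq_restrict_finset]
    exact hselsum
  have hXP1b : frob (restrictRows X P1) ≤ 2 * frob Eγ := by
    have t1 : frob (restrictRows X P1) ≤ frob (restrictRows V P1) + frob (restrictRows Eγ P1) := by
      have : restrictRows X P1 = restrictRows V P1 + -restrictRows Eγ P1 := by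
        rw [← hXP1]; abel
      rw [this]
      exact (frob_add_le _ _).trans (by rw [frob_neg])
    have t2 : frob (restrictRows V P1) ≤ frob Eγ := by
      refine le_trans (frob_le_frob ?_) (frob_restrict_le Eγ P2)
      rw [← hVP2E]
      exact hVsel
    have t3 : frob (restrictRows Eγ P1) ≤ frob Eγ := frob_restrict_le Eγ P1
    linarith
  -- Stage 3 : support bound
  set Xtc := restrictRows X {i | i ∉ That} with hXtcdef
  have hdecomp : Xtc = Xc + restrictRows X P1 := by
    ext i j
    rw [hXtcdef, hXcdef]
    rcases eq_or_ne (X i) 0 with h0 | h0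
    · have hz : X i j = 0 := congrFun h0 j
      simp [restrict_apply, Matrix.add_apply, hz]
    · have hiT : i ∈ T := hsupp i h0
      by_cases hiΓ : i ∈ Γ
      · by_cases hiTh : i ∈ That
        · have hP1 : i ∉ P1 := by
            rw [hP1def, Finset.mem_coe, Finset.mem_sdiff]
            push_neg
            intro _
            exact hiTh
          simp [restrict_apply, Matrix.add_apply, hiTh, hiΓ, hP1]
        · have hP1 : i ∈ P1 := by
            rw [hP1def, Finset.mem_coe, Finset.mem_sdiff, hSfin, Finset.mem_inter]
            exact ⟨⟨hiT, hiΓ⟩, hiTh⟩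
          simp [restrict_apply, Matrix.add_apply, hiTh, hiΓ, hP1]
      · have hiTh : i ∉ That := fun hh => hiΓ (hThatΓ hh)
        have hP1 : i ∉ P1 := by
          rw [hP1def, Finset.mem_coe, Finset.mem_sdiff, hSfin, Finset.mem_inter]
          push_neg
          intro hh
          exact absurd hh.2 hiΓ
        simp [restrict_apply, Matrix.add_apply, hiTh, hiΓ, hP1]
  have hbbound : frob Xtc ≤ a + 2 * frob Eγ := by
    rw [hdecomp]
    exact le_trans (frob_add_le _ _) (by linarith [hXP1b])
  -- Stage 4 : least squares on That
  set Xt := restrictRows X {i | i ∈ That} with hXtdef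
  have hsplitT : Xt + Xtc = X := restrict_add_compl X {i | i ∈ That}
  have hXtrs : rs Xt ⊆ ↑That := rs_restrict X {i | i ∈ That}
  have hDT1 : DT * colSub A That = 1 := pinv_one hδ hRIP hThatRK hDT
  have hfixT : extM That (DT * (A * Xt)) = Xt := by
    rw [mul_eq_colSub_mul_subM A That Xt hXtrs, ← Matrix.mul_assoc, hDT1, Matrix.one_mul,
      extM_subM That Xt hXtrs]
  set F1 := extM That (DT * (A * Xtc)) with hF1def
  set F2 := extM That (DT * W) with hF2def
  have hBT : B = A * Xt + (A * Xtc + W) := by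
    rw [hB, ← hsplitT, Matrix.mul_add, add_assoc]
  have hXhatE : Xhat = Xt + (F1 + F2) := by
    have hXhext : Xhat = extM That (DT * B) := hXhat
    rw [hXhext, hBT, Matrix.mul_add, extM_add, hfixT, Matrix.mul_add, extM_add]
  have hXmXhat : X - Xhat = Xtc + -F1 + -F2 := by
    rw [hXhatE, ← hsplitT]
    abel
  have hdle : frob (X - Xhat) ≤ frob Xtc + frob F1 + frob F2 := by
    rw [hXmXhat]
    refine le_trans (frob_add3_le _ _ _) ?_
    rw [frob_neg, frob_neg]
  have hXtcdisj : ∀ i ∈ That, Xtc i = 0 := by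
    intro i hi
    funext j
    rw [hXtcdef]
    simp [restrict_apply, hi]
  have hrsXtc : (rs Xtc).ncard ≤ K :=
    le_trans (Set.ncard_le_ncard (rs_restrict_subset X _) (Set.toFinite _)) hrsXn
  have hF1b : (1 - δ) * frob F1 ≤ δ * frob Xtc := by
    refine pinv_cross_bound hδ0 hδ hRIP hDT Xtc hXtcdisj ?_
    omega
  have hF2m : (1 - δ) * msq F2 ≤ msq W := pinv_bound hδ0 hδ hRIP hThatRK hDT W
  have hF2b : (1 - δ) * frob F2 ≤ w := by
    apply scale_le (frob_nonneg F2) (mul_nonneg h1δ.le (frob_nonneg F2)) _ hw0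
    have h1 : ((1 - δ) * frob F2) ^ 2 = (1 - δ) ^ 2 * msq F2 := by rw [mul_pow, frob_sq]
    have h2 : w ^ 2 = msq W := frob_sq W
    nlinarith [msq_nonneg F2, h1δ]
  -- final arithmetic
  have c1 := mul_le_mul_of_nonneg_left hdle h1δ.le
  have c2 : (1 - δ) * frob (X - Xhat) ≤ frob Xtc + w := by linarith [c1, hF1b, hF2b]
  have m1 := mul_le_mul_of_nonneg_left c2 h1δ.le
  have m2 := mul_le_mul_of_nonneg_left hbbound h1δ.le
  have hfinal : frob (X - Xhat) * (1 - δ) ^ 2 ≤ (1 + δ) * a + 3 * w := by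
    linarith [m1, m2, hEb, mul_nonneg hδ0 hw0]
  have part1 : frob (X - Xhat) ≤ ((1 + δ + 3 * ζ) / (1 - δ) ^ 2) * a := by
    rw [hζ, div_mul_eq_mul_div, le_div_iff₀ (by positivity : (0:ℝ) < (1 - δ) ^ 2)]
    have heq : (1 + δ + 3 * (w / a)) * a = (1 + δ) * a + 3 * w := by
      field_simp
    rw [heq]
    exact hfinal
  refine ⟨part1, ?_⟩
  intro _
  -- Part 2
  set t := frob (restrictRows X {i | i ∉ Ti}) with htdef
  have ht0 : 0 < t := lt_of_le_of_ne (frob_nonneg _) (Ne.symm hXTi)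
  have hζ0 : 0 ≤ ζ := by
    rw [hζ]
    exact div_nonneg hw0 ha0.le
  have hq0 : 0 < 1 + δ + 3 * ζ := by linarith
  have hη0 : 0 < ηi := by
    rw [hη]
    exact div_pos ha0 ht0
  have hat : a = ηi * t := by
    rw [hη]
    field_simp
  have htle : t ^ 2 ≤ frob (X - Xhati) ^ 2 := by
    rw [htdef, frob_sq, frob_sq]
    apply Finset.sum_le_sum
    intro i _
    apply Finset.sum_le_sum
    intro j _
    by_cases hi : i ∈ Ti
    · rw [restrict_apply, if_neg (show ¬ i ∈ ({i | i ∉ Ti} : Set (Fin N)) from not_not_intro hi)]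
      simpa using sq_nonneg ((X - Xhati) i j)
    · rw [restrict_apply, if_pos (show i ∈ ({i | i ∉ Ti} : Set (Fin N)) from hi)]
      have hz : Xhati i j = 0 := congrFun (hXhati i hi) j
      rw [Matrix.sub_apply, hz, sub_zero]
  have hd2 : frob (X - Xhat) ^ 2 ≤ (((1 + δ + 3 * ζ) / (1 - δ) ^ 2) * ηi) ^ 2 * t ^ 2 := by
    have hstep : frob (X - Xhat) ≤ ((1 + δ + 3 * ζ) / (1 - δ) ^ 2) * ηi * t := by
      rw [mul_assoc, ← hat]
      exact part1
    calc frob (X - Xhat) ^ 2 ≤ (((1 + δ + 3 * ζ) / (1 - δ) ^ 2) * ηi * t) ^ 2 :=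
          pow_le_pow_left₀ (frob_nonneg _) hstep 2
    _ = (((1 + δ + 3 * ζ) / (1 - δ) ^ 2) * ηi) ^ 2 * t ^ 2 := by ring
  have hCη : ((1 - δ) ^ 2 / ((1 + δ + 3 * ζ) * ηi)) * (((1 + δ + 3 * ζ) / (1 - δ) ^ 2) * ηi) = 1 := by
    field_simp
  calc ((1 - δ) ^ 2 / ((1 + δ + 3 * ζ) * ηi)) ^ 2 * frob (X - Xhat) ^ 2
      ≤ ((1 - δ) ^ 2 / ((1 + δ + 3 * ζ) * ηi)) ^ 2 *
        ((((1 + δ + 3 * ζ) / (1 - δ) ^ 2) * ηi) ^ 2 * t ^ 2) := by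
        apply mul_le_mul_of_nonneg_left hd2 (sq_nonneg _)
  _ = (((1 - δ) ^ 2 / ((1 + δ + 3 * ζ) * ηi)) * (((1 + δ + 3 * ζ) / (1 - δ) ^ 2) * ηi)) ^ 2
        * t ^ 2 := by ring
  _ = t ^ 2 := by rw [hCη, one_pow, one_mul]
  _ ≤ frob (X - Xhati) ^ 2 := htle
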